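/- Let F : ℝ^d → ℝ be L-smooth (its gradient is L-Lipschitz with respect to the ℓ2 norm). Let w_t = w_{t-1} − η·(sign(c_t) + λ·w_{t-1}) with η > 0, λ ≥ 0. Then F(w_t) ≤ F(w_{t-1}) − η·‖∇F(w_{t-1})‖₁ + 2√d·η·‖c_t − ∇F(w_{t-1})‖₂ + η·λ·‖∇F(w_{t-1})‖₁·‖w_{t-1}‖_∞ + (L/2)·‖w_t − w_{t-1}‖₂². -/

import Mathlib

open InnerProductSpace intervalIntegral

/-- Descent lemma. -/
lemma descent_lemma {E : Type*} [NormedAddCommGroup E] [InnerProductSpace ℝ E] [CompleteSpace E]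
    (F : E → ℝ) (g : E → E) (L : ℝ) (hL : 0 ≤ L)
    (hgrad : ∀ w, HasGradientAt F (g w) w)
    (hLip : ∀ x y, ‖g x - g y‖ ≤ L * ‖x - y‖) (x y : E) :
    F y ≤ F x + ⟪g x, y - x⟫_ℝ + L / 2 * ‖y - x‖ ^ 2 := by
  set v := y - x with hv
  have hgcont : Continuous g := by
    have : LipschitzWith (Real.toNNReal L) g := by
      apply LipschitzWith.of_dist_le_mul
      intro a b
      simpa [dist_eq_norm, Real.coe_toNNReal _ hL] using hLip a b
    exact this.continuous
  have hderiv : ∀ t : ℝ, HasDerivAt (fun s : ℝ => F (x + s • v))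
      (⟪g (x + t • v), v⟫_ℝ) t := by
    intro t
    have line : HasDerivAt (fun s : ℝ => x + s • v) v t := by
      simpa using ((hasDerivAt_id t).smul_const v).const_add x
    have := ((hgrad (x + t • v)).hasFDerivAt).comp_hasDerivAt t line
    exact this
  have hcont : Continuous fun t : ℝ => ⟪g (x + t • v), v⟫_ℝ := by
    exact (hgcont.comp (by continuity)).inner continuous_const
  have hint : ∫ t in (0:ℝ)..1, ⟪g (x + t • v), v⟫_ℝ = F (x + v) - F x := by
    have := intervalIntegral.integral_eq_sub_of_hasDerivAt
      (f := fun s : ℝ => F (x + s • v)) (f' := fun t => ⟪g (x + t • v), v⟫_ℝ)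
      (fun t _ => hderiv t) (hcont.intervalIntegrable 0 1)
    simpa using this
  have hxv : x + v = y := by simp [hv]
  have hmono : ∫ t in (0:ℝ)..1, ⟪g (x + t • v), v⟫_ℝ ≤
      ∫ t in (0:ℝ)..1, (⟪g x, v⟫_ℝ + L * t * ‖v‖ ^ 2) := by
    apply intervalIntegral.integral_mono_on (by norm_num)
      (hcont.intervalIntegrable 0 1)
      ((by continuity : Continuous fun t : ℝ => ⟪g x, v⟫_ℝ + L * t * ‖v‖^2).intervalIntegrable 0 1)
    intro t ht
    have h1 : ⟪g (x + t • v), v⟫_ℝ - ⟪g x, v⟫_ℝ = ⟪g (x + t • v) - g x, v⟫_ℝ := by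
      rw [inner_sub_left]
    have h2 : ⟪g (x + t • v) - g x, v⟫_ℝ ≤ ‖g (x + t • v) - g x‖ * ‖v‖ :=
      real_inner_le_norm _ _
    have h3 : ‖g (x + t • v) - g x‖ ≤ L * ‖(x + t • v) - x‖ := hLip _ _
    have h4 : ‖(x + t • v) - x‖ = t * ‖v‖ := by
      rw [add_sub_cancel_left, norm_smul, Real.norm_eq_abs, abs_of_nonneg ht.1]
    have h5 : ‖g (x + t • v) - g x‖ * ‖v‖ ≤ L * (t * ‖v‖) * ‖v‖ :=
      mul_le_mul_of_nonneg_right (h4 ▸ h3) (norm_nonneg v)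
    have h6 : L * (t * ‖v‖) * ‖v‖ = L * t * ‖v‖ ^ 2 := by ring
    linarith
  have hval : ∫ t in (0:ℝ)..1, (⟪g x, v⟫_ℝ + L * t * ‖v‖ ^ 2)
      = ⟪g x, v⟫_ℝ + L / 2 * ‖v‖ ^ 2 := by
    have he : ∀ t : ℝ, L * t * ‖v‖ ^ 2 = (L * ‖v‖ ^ 2) * t := fun t => by ring
    simp_rw [he]
    rw [intervalIntegral.integral_add intervalIntegrable_const
      ((by fun_prop : Continuous fun t : ℝ => L * ‖v‖ ^ 2 * t).intervalIntegrable 0 1),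
      intervalIntegral.integral_const_mul, integral_id]
    simp
    ring
  have := hint ▸ hmono
  rw [hval] at this
  rw [hxv] at this
  linarith

open InnerProductSpace intervalIntegral Finset

lemma sign_coord_bound (a b : ℝ) : |a| - a * Real.sign b ≤ 2 * |b - a| := by
  rcases lt_trichotomy b 0 with hb | hb | hb
  · rw [Real.sign_of_neg hb]
    rcases le_or_gt a 0 with ha | ha
    · rw [abs_of_nonpos ha]
      cases abs_cases (b - a) <;> nlinarith
    · rw [abs_of_pos ha, abs_of_nonpos (by linarith)]; linarith
  · simp [hb, Real.sign_zero, abs_sub_comm]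
    cases abs_cases a <;> linarith
  · rw [Real.sign_of_pos hb]
    rcases le_or_gt 0 a with ha | ha
    · rw [abs_of_nonneg ha]
      have := abs_nonneg (b - a); nlinarith
    · rw [abs_of_neg ha, abs_of_pos (by linarith)]; linarith

lemma l1_le_sqrt_l2 {d : ℕ} (x : EuclideanSpace ℝ (Fin d)) :
    ∑ j, |x j| ≤ Real.sqrt d * ‖x‖ := by
  set a : EuclideanSpace ℝ (Fin d) := WithLp.toLp 2 (fun j => |x j|) with ha
  set b : EuclideanSpace ℝ (Fin d) := WithLp.toLp 2 (fun _ => 1) with hb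
  have h1 : ⟪a, b⟫_ℝ = ∑ j, |x j| := by
    simp [PiLp.inner_apply, ha, hb]
  have h2 : ‖a‖ = ‖x‖ := by
    rw [EuclideanSpace.norm_eq, EuclideanSpace.norm_eq]
    congr 1
    apply Finset.sum_congr rfl
    intro j _
    simp [ha]
  have h3 : ‖b‖ = Real.sqrt d := by
    rw [EuclideanSpace.norm_eq]
    simp [hb]
  calc ∑ j, |x j| = ⟪a, b⟫_ℝ := h1.symm
    _ ≤ ‖a‖ * ‖b‖ := real_inner_le_norm a b
    _ = Real.sqrt d * ‖x‖ := by rw [h2, h3]; ring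
noncomputable def signVec {d : ℕ} (x : EuclideanSpace ℝ (Fin d)) : EuclideanSpace ℝ (Fin d) :=
  WithLp.toLp 2 (fun j => Real.sign (x j))

theorem descent_sign_step {d : ℕ} (F : EuclideanSpace ℝ (Fin d) → ℝ)
    (g : EuclideanSpace ℝ (Fin d) → EuclideanSpace ℝ (Fin d)) (L η lam : ℝ)
    (hη : 0 < η) (hlam : 0 ≤ lam) (hL : 0 ≤ L)
    (hgrad : ∀ w, HasGradientAt F (g w) w)
    (hLip : ∀ x y, ‖g x - g y‖ ≤ L * ‖x - y‖)
    (wprev wt c : EuclideanSpace ℝ (Fin d))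
    (hstep : wt = wprev - η • (signVec c + lam • wprev)) :
    F wt ≤ F wprev - η * ∑ j, |g wprev j| + 2 * Real.sqrt d * η * ‖c - g wprev‖
      + η * lam * (∑ j, |g wprev j|) * (⨆ j, |wprev j|)
      + (L / 2) * ‖wt - wprev‖ ^ 2 := by
  have hdesc := descent_lemma F g L hL hgrad hLip wprev wt
  set G := g wprev with hG
  have hdiff : wt - wprev = -(η • (signVec c + lam • wprev)) := by
    rw [hstep]; abel
  have hinner : ⟪G, wt - wprev⟫_ℝ
      = -(η * ⟪G, signVec c⟫_ℝ) - η * lam * ⟪G, wprev⟫_ℝ := by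
    rw [hdiff, inner_neg_right, inner_smul_right, inner_add_right, inner_smul_right]
    ring
  -- bound 1 : sign inner
  have hb1 : ∑ j, |G j| - ⟪G, signVec c⟫_ℝ ≤ 2 * Real.sqrt d * ‖c - G‖ := by
    have hi : ⟪G, signVec c⟫_ℝ = ∑ j, G j * Real.sign (c j) := by
      simp [PiLp.inner_apply, signVec, mul_comm]
    rw [hi, ← Finset.sum_sub_distrib]
    calc ∑ j, (|G j| - G j * Real.sign (c j))
        ≤ ∑ j, 2 * |c j - G j| := Finset.sum_le_sum fun j _ => sign_coord_bound (G j) (c j)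
      _ = 2 * ∑ j, |(c - G) j| := by
          rw [Finset.mul_sum]
          exact Finset.sum_congr rfl fun j _ => by simp
      _ ≤ 2 * (Real.sqrt d * ‖c - G‖) := by
          have := l1_le_sqrt_l2 (c - G)
          linarith
      _ = 2 * Real.sqrt d * ‖c - G‖ := by ring
  -- bound 2 : weight decay inner
  have hb2 : -⟪G, wprev⟫_ℝ ≤ (∑ j, |G j|) * (⨆ j, |wprev j|) := by
    have hM : ∀ j, |wprev j| ≤ ⨆ j, |wprev j| := fun j =>
      le_ciSup (f := fun j => |wprev j|) (Set.Finite.bddAbove (Set.finite_range _)) j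
    have hi : ⟪G, wprev⟫_ℝ = ∑ j, G j * wprev j := by
      simp [PiLp.inner_apply, mul_comm]
    rw [hi, ← Finset.sum_neg_distrib, Finset.sum_mul]
    apply Finset.sum_le_sum
    intro j _
    calc -(G j * wprev j) ≤ |G j * wprev j| := neg_le_abs _
      _ = |G j| * |wprev j| := abs_mul _ _
      _ ≤ |G j| * (⨆ j, |wprev j|) := mul_le_mul_of_nonneg_left (hM j) (abs_nonneg _)
  have h1 : -(η * ⟪G, signVec c⟫_ℝ)
      ≤ -(η * ∑ j, |G j|) + 2 * Real.sqrt d * η * ‖c - G‖ := by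
    nlinarith [hb1]
  have h2 : -(η * lam * ⟪G, wprev⟫_ℝ)
      ≤ η * lam * (∑ j, |G j|) * (⨆ j, |wprev j|) := by
    have hel : 0 ≤ η * lam := mul_nonneg hη.le hlam
    nlinarith [hb2]
  rw [hinner] at hdesc
  linarith [hdesc, h1, h2]
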